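/- For every t ≥ 1 and every integer s with 0 ≤ s < p_t, s is a hole at level t (i.e. s ∉ Per_{p_t}(η)) if and only if 2^t | s and b_i ∤ s for every 1 ≤ i ≤ t. -/

import Mathlib

open scoped BigOperators

-- The indicator function of the `\mathscr{B}`-free integers for
--`\mathscr{B} = {2^i b_i : i \ge 1}`. 
open Classical in
noncomputable def eta (b : ℕ → ℕ) : ℤ → ℕ := fun n =>
  if (∀ i : ℕ, 1 ≤ i → ¬ ((2 : ℤ) ^ i * (b i : ℤ) ∣ n)) then 1 else 0

-- `Per x s` is the set of `s`-periodic positions of `x`. 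
def Per (x : ℤ → ℕ) (s : ℕ) : Set ℤ := {n : ℤ | ∀ k : ℤ, x (n + k * s) = x n}

-- `pp b t = 2^t * b_1 * b_2 * \cdots * b_t`. 
def pp (b : ℕ → ℕ) (t : ℕ) : ℕ := 2 ^ t * ∏ i ∈ Finset.Icc 1 t, b i


/-!
Write `p_t = 2^t M` with `M = b_1 ⋯ b_t` odd. For `i ≤ t` the modulus `2^i b_i` divides `p_t`, so
`2^i b_i ∣ n` is invariant under `n ↦ n + k p_t`; for `i > t` it is impossible unless `2^t ∣ n`.
Hence `η` is `p_t`-periodic at `n` if `2^t ∤ n`, and also if `2^t ∣ n` and some `b_i ∣ n` with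
`i ≤ t`, where `η` vanishes on the whole progression. Otherwise `n = 2^t m` with `b_i ∤ m` for
`i ≤ t`, and `n + k p_t = 2^t (m + k M)`: choosing `m + k M` odd gives `η = 1`, while choosing
`2 b_{t+1} ∣ m + k M`, possible because `M` is coprime to `2 b_{t+1}`, gives `η = 0`.
-/

open Finset

theorem eta_eq_one_iff (b : ℕ → ℕ) (n : ℤ) :
    eta b n = 1 ↔ ∀ i : ℕ, 1 ≤ i → ¬ ((2 : ℤ) ^ i * (b i : ℤ) ∣ n) := by
  unfold eta
  split_ifs with h <;> simpa using h

theorem eta_eq_zero_of_dvd (b : ℕ → ℕ) {n : ℤ} {i : ℕ} (hi : 1 ≤ i)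
    (h : (2 : ℤ) ^ i * (b i : ℤ) ∣ n) : eta b n = 0 := by
  unfold eta
  rw [if_neg fun h' => h' i hi h]

theorem eta_congr (b : ℕ → ℕ) {n m : ℤ}
    (h : ∀ i : ℕ, 1 ≤ i → ((2 : ℤ) ^ i * (b i : ℤ) ∣ n ↔ (2 : ℤ) ^ i * (b i : ℤ) ∣ m)) :
    eta b n = eta b m := by
  classical
  unfold eta
  exact if_congr (forall_congr' fun i => imp_congr_right fun hi => not_congr (h i hi)) rfl rfl

theorem exists_dvd_add_mul_of_isCoprime {R : Type*} [CommRing R] {M d : R} (h : IsCoprime M d)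
    (a : R) : ∃ k, d ∣ a + k * M := by
  obtain ⟨u, v, huv⟩ := h
  exact ⟨-(a * u), ⟨a * v, by linear_combination -a * huv⟩⟩

theorem Int.le_and_dvd_of_two_pow_mul_dvd_two_pow_mul {c m : ℤ} {i t : ℕ} (hc : Odd c)
    (hm : Odd m) (h : 2 ^ i * c ∣ 2 ^ t * m) : i ≤ t ∧ c ∣ m := by
  refine ⟨?_, ?_⟩
  · by_contra! hti
    have : (2 : ℤ) ^ t * 2 ∣ 2 ^ t * m := by
      rw [← pow_succ]
      exact (pow_dvd_pow 2 hti).trans ((dvd_mul_right _ _).trans h)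
    exact Int.not_even_iff_odd.2 hm
      (even_iff_two_dvd.2 ((mul_dvd_mul_iff_left (by positivity)).1 this))
  · exact ((Int.isCoprime_two_right.2 hc).pow_right).dvd_of_dvd_mul_left
      ((dvd_mul_left _ _).trans h)

section pp

variable {b : ℕ → ℕ} {t : ℕ}

theorem pp_cast_eq : (pp b t : ℤ) = 2 ^ t * ∏ i ∈ Icc 1 t, (b i : ℤ) := by
  push_cast [pp]
  rfl

theorem two_pow_dvd_pp : (2 : ℤ) ^ t ∣ pp b t :=
  pp_cast_eq ▸ dvd_mul_right _ _

theorem two_pow_mul_dvd_pp {i : ℕ} (hi : 1 ≤ i) (hit : i ≤ t) :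
    (2 : ℤ) ^ i * (b i : ℤ) ∣ pp b t :=
  pp_cast_eq ▸ mul_dvd_mul (pow_dvd_pow 2 hit) (dvd_prod_of_mem _ (mem_Icc.2 ⟨hi, hit⟩))

theorem mem_Per_pp_of_not_two_pow_dvd {n : ℤ} (hn : ¬ (2 : ℤ) ^ t ∣ n) :
    n ∈ Per (eta b) (pp b t) := by
  intro k
  apply eta_congr
  intro i hi
  rcases le_or_gt i t with hit | hti
  · exact dvd_add_left ((two_pow_mul_dvd_pp hi hit).mul_left k)
  · have h2 : (2 : ℤ) ^ t ∣ 2 ^ i * b i := (pow_dvd_pow 2 hti.le).mul_right _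
    have hn' : ¬ (2 : ℤ) ^ t ∣ n + k * pp b t := by
      rwa [dvd_add_left (two_pow_dvd_pp.mul_left k)]
    exact iff_of_false (fun h => hn' (h2.trans h)) (fun h => hn (h2.trans h))

theorem mem_Per_pp_of_dvd {i : ℕ} (hodd : Odd (b i)) (hi : 1 ≤ i) (hit : i ≤ t) {n : ℤ}
    (h2 : (2 : ℤ) ^ t ∣ n) (hb : (b i : ℤ) ∣ n) : n ∈ Per (eta b) (pp b t) := by
  have hcop : IsCoprime ((2 : ℤ) ^ i) (b i) :=
    (Int.isCoprime_two_left.2 (by exact_mod_cast hodd)).pow_left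
  have hn : (2 : ℤ) ^ i * b i ∣ n := hcop.mul_dvd ((pow_dvd_pow 2 hit).trans h2) hb
  intro k
  rw [eta_eq_zero_of_dvd b hi hn,
    eta_eq_zero_of_dvd b hi (dvd_add hn ((two_pow_mul_dvd_pp hi hit).mul_left k))]

theorem eta_two_pow_mul_eq_one (hodd : ∀ i : ℕ, 1 ≤ i → Odd (b i)) {m : ℤ} (hm : Odd m)
    (hb : ∀ i : ℕ, 1 ≤ i → i ≤ t → ¬ ((b i : ℤ) ∣ m)) : eta b (2 ^ t * m) = 1 := by
  refine (eta_eq_one_iff b _).2 fun i hi hdvd => ?_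
  obtain ⟨hit, hbm⟩ :=
    Int.le_and_dvd_of_two_pow_mul_dvd_two_pow_mul (by exact_mod_cast hodd i hi) hm hdvd
  exact hb i hi hit hbm

theorem two_pow_mul_not_mem_Per_pp (hodd : ∀ i : ℕ, 1 ≤ i → Odd (b i))
    (hcop : ∀ i : ℕ, 1 ≤ i → i ≤ t → Nat.Coprime (b i) (b (t + 1))) {m : ℤ}
    (hb : ∀ i : ℕ, 1 ≤ i → i ≤ t → ¬ ((b i : ℤ) ∣ m)) :
    2 ^ t * m ∉ Per (eta b) (pp b t) := by
  set M := ∏ i ∈ Icc 1 t, (b i : ℤ)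
  have hshift (k : ℤ) : 2 ^ t * m + k * pp b t = 2 ^ t * (m + k * M) := by
    rw [pp_cast_eq]; ring
  have hMcop : IsCoprime M (2 * b (t + 1)) := IsCoprime.prod_left fun i hi =>
    have ⟨hi1, hit⟩ := mem_Icc.1 hi
    (Int.isCoprime_two_right.2 (by exact_mod_cast hodd i hi1)).mul_right
      (Nat.isCoprime_iff_coprime.2 (hcop i hi1 hit))
  have hModd : Odd M := Int.isCoprime_two_right.1 hMcop.of_mul_right_left
  obtain ⟨k₁, hk₁⟩ : ∃ k : ℤ, Odd (m + k * M) := by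
    rcases Int.even_or_odd m with hm | hm
    · exact ⟨1, by simpa using hm.add_odd hModd⟩
    · exact ⟨0, by simpa using hm⟩
  obtain ⟨k₀, hk₀⟩ := exists_dvd_add_mul_of_isCoprime hMcop m
  have h₁ : eta b (2 ^ t * m + k₁ * pp b t) = 1 := by
    rw [hshift]
    refine eta_two_pow_mul_eq_one hodd hk₁ fun i hi hit hdvd => hb i hi hit ?_
    exact (dvd_add_left ((dvd_prod_of_mem _ (mem_Icc.2 ⟨hi, hit⟩)).mul_left k₁)).1 hdvd
  have h₀ : eta b (2 ^ t * m + k₀ * pp b t) = 0 := by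
    refine eta_eq_zero_of_dvd b (Nat.le_add_left 1 t) ?_
    rw [hshift, pow_succ, mul_assoc]
    exact mul_dvd_mul_left _ hk₀
  intro hper
  rw [hper] at h₀ h₁
  exact one_ne_zero (h₁.symm.trans h₀)

end pp

theorem hole_characterization_general (b : ℕ → ℕ)
    (hodd : ∀ i : ℕ, 1 ≤ i → Odd (b i))
    (hcop : ∀ i j : ℕ, 1 ≤ i → 1 ≤ j → i ≠ j → Nat.Coprime (b i) (b j))
    (t : ℕ) (s : ℤ) :
    s ∉ Per (eta b) (pp b t) ↔
      ((2 : ℤ) ^ t ∣ s ∧ ∀ i : ℕ, 1 ≤ i → i ≤ t → ¬ ((b i : ℤ) ∣ s)) := by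
  constructor
  · intro hs
    by_contra! hcon
    by_cases h2 : (2 : ℤ) ^ t ∣ s
    · obtain ⟨i, hi, hit, hbi⟩ := hcon h2
      exact hs (mem_Per_pp_of_dvd (hodd i hi) hi hit h2 hbi)
    · exact hs (mem_Per_pp_of_not_two_pow_dvd h2)
  · rintro ⟨⟨m, rfl⟩, hb⟩
    exact two_pow_mul_not_mem_Per_pp hodd (fun i hi hit => hcop i (t + 1) hi (by omega) (by omega))
      fun i hi hit hdvd => hb i hi hit (hdvd.mul_left _)

theorem hole_characterization (b : ℕ → ℕ)
    (hodd : ∀ i : ℕ, 1 ≤ i → Odd (b i))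
    (hgt : ∀ i : ℕ, 1 ≤ i → 1 < b i)
    (hcop : ∀ i j : ℕ, 1 ≤ i → 1 ≤ j → i ≠ j → Nat.Coprime (b i) (b j))
    (t : ℕ) (ht : 1 ≤ t) (s : ℤ) (hs0 : 0 ≤ s) (hs1 : s < (pp b t : ℤ)) :
    s ∉ Per (eta b) (pp b t) ↔
      ((2 : ℤ) ^ t ∣ s ∧ ∀ i : ℕ, 1 ≤ i → i ≤ t → ¬ ((b i : ℤ) ∣ s)) :=
  hole_characterization_general b hodd hcop t s
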